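/- arXiv:0809.3530 — 4 statements merged into one kernel-verified Lean document; each statement's English description precedes it below -/
import Mathlib

section
/- Under the stated assumptions, for every natural number n and every t ≥ 0 one has y(nT) = L(T) + e^{n·a(T)}·( y(0) − L(T) ) + n·(e^{a(T)}/(1 − e^{a(T)}))·∫₀ᵀ β(s)e^{−a(s)} ds, where L(T) = (e^{a(T)}/(1 − e^{a(T)}))·∫₀ᵀ b(s)e^{−a(s)} ds − (e^{a(T)}/(1 − e^{a(T)})²)·∫₀ᵀ β(s)e^{−a(s)} ds. -/
open MeasureTheory intervalIntegral Real

/-- For the solution `y t = e^{a t} (y 0 + ∫₀ᵗ b e^{-a})` of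
`y' = λ ρ y + b`, one has
`y (nT) = L(T) + e^{n a(T)} (y 0 - L(T)) + n (e^{a T}/(1-e^{a T})) ∫₀ᵀ β e^{-a}`. -/
theorem y_nT_formula (lam T : ℝ) (hlam : lam < 0) (hT : 0 < T)
    (ρ : ℝ → ℝ) (hρc : ContinuousOn ρ (Set.Ici 0))
    (hρp : ∀ t ≥ (0:ℝ), ρ (t + T) = ρ t)
    (hρpos : 0 < ∫ s in (0:ℝ)..T, ρ s)
    (a : ℝ → ℝ) (ha : ∀ t, a t = lam * ∫ s in (0:ℝ)..t, ρ s)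
    (b β : ℝ → ℝ) (hbc : ContinuousOn b (Set.Ici 0)) (hβc : ContinuousOn β (Set.Ici 0))
    (hβp : ∀ t ≥ (0:ℝ), β (t + T) = β t)
    (hdrift : ∀ t ≥ (0:ℝ), b (t + T) = b t + β t)
    (y : ℝ → ℝ)
    (hy : ∀ t, y t = Real.exp (a t) * (y 0 + ∫ s in (0:ℝ)..t, b s * Real.exp (-(a s))))
    (L : ℝ)
    (hL : L = (Real.exp (a T) / (1 - Real.exp (a T))) *
        (∫ s in (0:ℝ)..T, b s * Real.exp (-(a s)))
      - (Real.exp (a T) / (1 - Real.exp (a T)) ^ 2) *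
        (∫ s in (0:ℝ)..T, β s * Real.exp (-(a s)))) :
    ∀ n : ℕ, y (n * T) = L + Real.exp (n * a T) * (y 0 - L)
      + n * ((Real.exp (a T) / (1 - Real.exp (a T))) *
          (∫ s in (0:ℝ)..T, β s * Real.exp (-(a s)))) := by
  -- notation
  set E := Real.exp (a T) with hE
  set B := ∫ s in (0:ℝ)..T, b s * Real.exp (-(a s)) with hB
  set C := ∫ s in (0:ℝ)..T, β s * Real.exp (-(a s)) with hC
  -- E < 1
  have haT : a T < 0 := by
    rw [ha]; exact mul_neg_of_neg_of_pos hlam hρpos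
  have hElt : E < 1 := Real.exp_lt_one_iff.mpr haT
  have hF : (1 : ℝ) - E ≠ 0 := by linarith
  -- integrability of ρ on subintervals of [0, ∞)
  have hρint : ∀ u v : ℝ, 0 ≤ u → 0 ≤ v → IntervalIntegrable ρ volume u v := by
    intro u v hu hv
    refine (hρc.mono ?_).intervalIntegrable
    intro x hx
    have := hx.1
    rcases le_total u v with h | h
    · rw [Set.uIcc_of_le h] at hx; exact le_trans hu hx.1
    · rw [Set.uIcc_of_ge h] at hx; exact le_trans hv hx.1
  -- continuity of a on [0, X]
  have hacont : ∀ X : ℝ, 0 ≤ X → ContinuousOn a (Set.Icc 0 X) := by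
    intro X hX
    have h1 : ContinuousOn (fun t => ∫ s in (0:ℝ)..t, ρ s) (Set.Icc 0 X) := by
      have := intervalIntegral.continuousOn_primitive_interval'
        (μ := volume) (f := ρ) (b₁ := (0:ℝ)) (b₂ := X)
        (hρint 0 X le_rfl hX) Set.left_mem_uIcc
      rwa [Set.uIcc_of_le hX] at this
    have : ContinuousOn (fun t => lam * ∫ s in (0:ℝ)..t, ρ s) (Set.Icc 0 X) :=
      continuousOn_const.mul h1
    exact this.congr (fun t _ => ha t)
  -- a(t+T) = a t + a T for t ≥ 0
  have haT_add : ∀ t ≥ (0:ℝ), a (t + T) = a t + a T := by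
    intro t ht
    have hsplit : (∫ s in (0:ℝ)..(t + T), ρ s)
        = (∫ s in (0:ℝ)..T, ρ s) + ∫ s in T..(t + T), ρ s := by
      rw [intervalIntegral.integral_add_adjacent_intervals
        (hρint 0 T le_rfl hT.le) (hρint T (t + T) hT.le (by linarith))]
    have hshift : (∫ s in T..(t + T), ρ s) = ∫ s in (0:ℝ)..t, ρ s := by
      have h1 : (∫ u in (0:ℝ)..t, ρ (u + T)) = ∫ s in (0 + T)..(t + T), ρ s :=
        intervalIntegral.integral_comp_add_right (fun s => ρ s) T
      have h2 : (∫ u in (0:ℝ)..t, ρ (u + T)) = ∫ u in (0:ℝ)..t, ρ u := by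
        apply intervalIntegral.integral_congr
        intro u hu
        rw [Set.uIcc_of_le ht] at hu
        exact hρp u hu.1
      rw [← h2, h1, zero_add]
    rw [ha, ha, ha, hsplit, hshift]; ring
  -- a(t + nT) = a t + n a T for t ≥ 0
  have haN : ∀ n : ℕ, ∀ t ≥ (0:ℝ), a (t + n * T) = a t + n * a T := by
    intro n
    induction n with
    | zero => intro t ht; simp
    | succ n ih =>
      intro t ht
      have h1 : t + (n + 1 : ℕ) * T = (t + n * T) + T := by push_cast; ring
      have h2 : (0:ℝ) ≤ t + n * T := by positivity
      rw [h1, haT_add _ h2, ih t ht]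
      push_cast; ring
  -- β(t + nT) = β t for t ≥ 0
  have hβN : ∀ n : ℕ, ∀ t ≥ (0:ℝ), β (t + n * T) = β t := by
    intro n
    induction n with
    | zero => intro t ht; simp
    | succ n ih =>
      intro t ht
      have h1 : t + (n + 1 : ℕ) * T = (t + n * T) + T := by push_cast; ring
      have h2 : (0:ℝ) ≤ t + n * T := by positivity
      rw [h1, hβp _ h2, ih t ht]
  -- b(t + nT) = b t + n β t for t ≥ 0
  have hbN : ∀ n : ℕ, ∀ t ≥ (0:ℝ), b (t + n * T) = b t + n * β t := by
    intro n
    induction n with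
    | zero => intro t ht; simp
    | succ n ih =>
      intro t ht
      have h1 : t + (n + 1 : ℕ) * T = (t + n * T) + T := by push_cast; ring
      have h2 : (0:ℝ) ≤ t + n * T := by positivity
      rw [h1, hdrift _ h2, ih t ht, hβN n t ht]
      push_cast; ring
  -- integrability of f·e^{-a} on subintervals of [0,∞)
  have hInt : ∀ (f : ℝ → ℝ), ContinuousOn f (Set.Ici 0) → ∀ u v : ℝ, 0 ≤ u → 0 ≤ v →
      IntervalIntegrable (fun s => f s * Real.exp (-(a s))) volume u v := by
    intro f hf u v hu hv
    have hsub : Set.uIcc u v ⊆ Set.Icc 0 (max u v) := by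
      rw [Set.uIcc]
      exact Set.Icc_subset_Icc (le_min hu hv) le_rfl
    refine ContinuousOn.intervalIntegrable ?_
    have hac : ContinuousOn a (Set.uIcc u v) :=
      (hacont (max u v) (le_max_of_le_left hu)).mono hsub
    have hfc : ContinuousOn f (Set.uIcc u v) :=
      hf.mono (fun x hx => (hsub hx).1)
    exact hfc.mul ((Real.continuous_exp.comp_continuousOn hac.neg))
  -- the main step on integrals
  have key : ∀ n : ℕ,
      (∫ s in (0:ℝ)..((n+1 : ℕ) * T), b s * Real.exp (-(a s)))
        = (∫ s in (0:ℝ)..(n * T), b s * Real.exp (-(a s)))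
          + Real.exp (-(n * a T)) * (B + n * C) := by
    intro n
    have hn0 : (0:ℝ) ≤ n * T := by positivity
    have hn1 : (0:ℝ) ≤ (n+1 : ℕ) * T := by positivity
    have hsplit : (∫ s in (0:ℝ)..((n+1 : ℕ) * T), b s * Real.exp (-(a s)))
        = (∫ s in (0:ℝ)..(n * T), b s * Real.exp (-(a s)))
          + ∫ s in (n * T : ℝ)..((n+1 : ℕ) * T), b s * Real.exp (-(a s)) := by
      rw [intervalIntegral.integral_add_adjacent_intervals
        (hInt b hbc 0 (n * T) le_rfl hn0) (hInt b hbc (n * T) ((n+1 : ℕ) * T) hn0 hn1)]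
    rw [hsplit]
    congr 1
    -- shift the last integral
    have hcomp : (∫ u in (0:ℝ)..T, b (u + n * T) * Real.exp (-(a (u + n * T))))
        = ∫ s in (0 + n * T : ℝ)..(T + n * T), b s * Real.exp (-(a s)) :=
      intervalIntegral.integral_comp_add_right (fun s => b s * Real.exp (-(a s))) (n * T)
    have hbound : (0 + n * T : ℝ) = n * T := by ring
    have hbound2 : (T + n * T : ℝ) = (n+1 : ℕ) * T := by push_cast; ring
    rw [hbound, hbound2] at hcomp
    rw [← hcomp]
    have hcongr : (∫ u in (0:ℝ)..T, b (u + n * T) * Real.exp (-(a (u + n * T))))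
        = ∫ u in (0:ℝ)..T, Real.exp (-(n * a T)) *
            (b u * Real.exp (-(a u)) + n * (β u * Real.exp (-(a u)))) := by
      apply intervalIntegral.integral_congr
      intro u hu
      rw [Set.uIcc_of_le hT.le] at hu
      show b (u + (n:ℝ) * T) * Real.exp (-(a (u + (n:ℝ) * T))) = _
      rw [hbN n u hu.1, haN n u hu.1, neg_add, Real.exp_add]
      ring
    rw [hcongr, intervalIntegral.integral_const_mul]
    congr 1
    rw [intervalIntegral.integral_add (hInt b hbc 0 T le_rfl hT.le)
      (((hInt β hβc 0 T le_rfl hT.le)).const_mul (n : ℝ)),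
      intervalIntegral.integral_const_mul]
  -- main induction
  intro n
  induction n with
  | zero =>
    rw [Nat.cast_zero, zero_mul, zero_mul, zero_mul, Real.exp_zero, one_mul]
    ring
  | succ n ih =>
    have hyn1 : y ((n+1 : ℕ) * T) = E * y (n * T) + E * (B + n * C) := by
      rw [hy ((n+1 : ℕ) * T), hy ((n : ℝ) * T), key n]
      have h0 : a 0 = 0 := by rw [ha]; simp
      have ha1 : a ((n+1 : ℕ) * T) = (n+1 : ℕ) * a T := by
        have h := haN (n+1) 0 le_rfl
        rwa [zero_add, h0, zero_add] at h
      have ha2 : a ((n : ℝ) * T) = n * a T := by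
        have h := haN n 0 le_rfl
        rwa [zero_add, h0, zero_add] at h
      rw [ha1, ha2]
      push_cast
      rw [add_mul, one_mul, Real.exp_add, ← hE]
      rw [show Real.exp (-((n:ℝ) * a T)) = (Real.exp ((n:ℝ) * a T))⁻¹ by
        rw [← Real.exp_neg]]
      have hne : Real.exp ((n:ℝ) * a T) ≠ 0 := (Real.exp_pos _).ne'
      field_simp
      ring
    rw [hyn1, ih, hL]
    have hexp : Real.exp (((n:ℕ)+1 : ℕ) * a T) = Real.exp ((n:ℝ) * a T) * E := by
      push_cast
      rw [add_mul, one_mul, Real.exp_add]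
    push_cast
    push_cast at hexp
    rw [hexp]
    field_simp
    ring
end

section
/- Under the stated assumptions, writing yₙ(t) = y(t + nT), for every natural number n and every t ≥ 0 one has yₙ(t) = y_∞(t) + e^{a(t)+n·a(T)}·( y(0) − L(T) ) + n·γ(t), where y_∞(t) = e^{a(t)}·( L(T) + ∫₀ᵗ b(s)e^{−a(s)} ds ), L(T) = (e^{a(T)}/(1 − e^{a(T)}))·∫₀ᵀ b(s)e^{−a(s)} ds − (e^{a(T)}/(1 − e^{a(T)})²)·∫₀ᵀ β(s)e^{−a(s)} ds, and γ(t) = e^{a(t)}·( (e^{a(T)}/(1 − e^{a(T)}))·∫₀ᵀ β(s)e^{−a(s)} ds + ∫₀ᵗ β(s)e^{−a(s)} ds ). -/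
open MeasureTheory intervalIntegral Real

lemma primitive_continuousOn_aux (f : ℝ → ℝ) (hf : ContinuousOn f (Set.Ici 0)) :
    ContinuousOn (fun t => ∫ s in (0:ℝ)..t, f s) (Set.Ici 0) := by
  intro x hx
  have hx0 : (0:ℝ) ≤ x := hx
  have hsub : Set.Icc (0:ℝ) (x+1) ⊆ Set.Ici 0 := Set.Icc_subset_Ici_self
  have hint : MeasureTheory.IntegrableOn f (Set.Icc (0:ℝ) (x+1)) MeasureTheory.volume :=
    (hf.mono hsub).integrableOn_Icc
  have huIcc : Set.uIcc (0:ℝ) (x+1) = Set.Icc 0 (x+1) := Set.uIcc_of_le (by linarith)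
  have h : ContinuousOn (fun t => ∫ s in (0:ℝ)..t, f s) (Set.Icc 0 (x+1)) := by
    rw [← huIcc]
    exact intervalIntegral.continuousOn_primitive_interval (by rwa [huIcc])
  have hmem : Set.Icc (0:ℝ) (x+1) ∈ nhdsWithin x (Set.Ici 0) := by
    rw [← Set.Ici_inter_Iic]
    exact Filter.inter_mem self_mem_nhdsWithin
      (mem_nhdsWithin_of_mem_nhds (Iic_mem_nhds (by linarith : x < x + 1)))
  exact (h x ⟨hx0, by linarith⟩).mono_of_mem_nhdsWithin hmem

lemma primitive_shift_aux (f g : ℝ → ℝ) (T : ℝ) (hT : 0 ≤ T)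
    (hf : ContinuousOn f (Set.Ici 0))
    (hfg : ∀ s ≥ (0:ℝ), f (s + T) = g s) (t : ℝ) (ht : 0 ≤ t) :
    (∫ s in (0:ℝ)..(t+T), f s) = (∫ s in (0:ℝ)..T, f s) + ∫ s in (0:ℝ)..t, g s := by
  have hi1 : IntervalIntegrable f volume 0 T := by
    refine (hf.mono ?_).intervalIntegrable
    rw [Set.uIcc_of_le hT]; exact Set.Icc_subset_Ici_self
  have hi2 : IntervalIntegrable f volume T (t+T) := by
    refine (hf.mono ?_).intervalIntegrable
    rw [Set.uIcc_of_le (by linarith)]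
    exact fun s hs => le_trans hT hs.1
  rw [← intervalIntegral.integral_add_adjacent_intervals hi1 hi2]
  congr 1
  have h1 : (∫ s in (0:ℝ)..t, f (s + T)) = ∫ s in (0+T:ℝ)..(t+T), f s :=
    intervalIntegral.integral_comp_add_right f T
  rw [zero_add] at h1
  rw [← h1]
  apply intervalIntegral.integral_congr
  intro s hs
  rw [Set.uIcc_of_le ht] at hs
  exact hfg s hs.1

/-- `yₙ(t) = y(t + nT) = y_∞(t) + e^{a(t)+n a(T)} (y 0 - L(T)) + n γ(t)`. -/
theorem y_n_decomposition (lam T : ℝ) (hlam : lam < 0) (hT : 0 < T)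
    (ρ : ℝ → ℝ) (hρc : ContinuousOn ρ (Set.Ici 0))
    (hρp : ∀ t ≥ (0:ℝ), ρ (t + T) = ρ t)
    (hρpos : 0 < ∫ s in (0:ℝ)..T, ρ s)
    (a : ℝ → ℝ) (ha : ∀ t, a t = lam * ∫ s in (0:ℝ)..t, ρ s)
    (b β : ℝ → ℝ) (hbc : ContinuousOn b (Set.Ici 0)) (hβc : ContinuousOn β (Set.Ici 0))
    (hβp : ∀ t ≥ (0:ℝ), β (t + T) = β t)
    (hdrift : ∀ t ≥ (0:ℝ), b (t + T) = b t + β t)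
    (y : ℝ → ℝ)
    (hy : ∀ t, y t = Real.exp (a t) * (y 0 + ∫ s in (0:ℝ)..t, b s * Real.exp (-(a s))))
    (L : ℝ)
    (hL : L = (Real.exp (a T) / (1 - Real.exp (a T))) *
        (∫ s in (0:ℝ)..T, b s * Real.exp (-(a s)))
      - (Real.exp (a T) / (1 - Real.exp (a T)) ^ 2) *
        (∫ s in (0:ℝ)..T, β s * Real.exp (-(a s))))
    (yInf : ℝ → ℝ)
    (hyInf : ∀ t, yInf t = Real.exp (a t) * (L + ∫ s in (0:ℝ)..t, b s * Real.exp (-(a s))))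
    (γ : ℝ → ℝ)
    (hγ : ∀ t, γ t = Real.exp (a t) *
      ((Real.exp (a T) / (1 - Real.exp (a T))) * (∫ s in (0:ℝ)..T, β s * Real.exp (-(a s)))
        + ∫ s in (0:ℝ)..t, β s * Real.exp (-(a s)))) :
    ∀ n : ℕ, ∀ t ≥ (0:ℝ),
      y (t + n * T) = yInf t + Real.exp (a t + n * a T) * (y 0 - L) + n * γ t := by
  have haT_neg : a T < 0 := by rw [ha]; exact mul_neg_of_neg_of_pos hlam hρpos
  set E := Real.exp (a T) with hE
  have hE0 : 0 < E := Real.exp_pos _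
  have hE1 : E < 1 := by rw [hE, Real.exp_lt_one_iff]; exact haT_neg
  have h1E : (1:ℝ) - E ≠ 0 := by linarith
  have hEne : E ≠ 0 := ne_of_gt hE0
  have hEE : E * E⁻¹ = 1 := mul_inv_cancel₀ hEne
  -- continuity of a on [0, ∞)
  have hacont : ContinuousOn a (Set.Ici 0) := by
    have h1 := (primitive_continuousOn_aux ρ hρc).const_smul lam
    have h2 : a = fun t => lam * ∫ s in (0:ℝ)..t, ρ s := funext ha
    rw [h2]; exact h1
  have hexp : ContinuousOn (fun s => Real.exp (-(a s))) (Set.Ici 0) :=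
    Real.continuous_exp.comp_continuousOn hacont.neg
  have hbint : ContinuousOn (fun s => b s * Real.exp (-(a s))) (Set.Ici 0) := hbc.mul hexp
  have hβint : ContinuousOn (fun s => β s * Real.exp (-(a s))) (Set.Ici 0) := hβc.mul hexp
  -- additivity of a
  have hashift : ∀ t ≥ (0:ℝ), a (t + T) = a t + a T := by
    intro t ht
    rw [ha (t+T), ha t, ha T, primitive_shift_aux ρ ρ T hT.le hρc hρp t ht]
    ring
  have haN : ∀ n : ℕ, ∀ t ≥ (0:ℝ), a (t + n * T) = a t + n * a T := by
    intro n
    induction n with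
    | zero => intro t ht; simp
    | succ n ih =>
      intro t ht
      have hpos : (0:ℝ) ≤ t + n * T := by positivity
      have h1 : t + ((n:ℕ)+1 : ℕ) * T = (t + n * T) + T := by push_cast; ring
      rw [h1, hashift _ hpos, ih t ht]
      push_cast; ring
  -- shift identities for the primitives of b e^{-a} and β e^{-a}
  have hGshift : ∀ u ≥ (0:ℝ),
      (∫ s in (0:ℝ)..(u+T), β s * Real.exp (-(a s)))
        = (∫ s in (0:ℝ)..T, β s * Real.exp (-(a s)))
          + E⁻¹ * ∫ s in (0:ℝ)..u, β s * Real.exp (-(a s)) := by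
    intro u hu
    have hfg : ∀ s ≥ (0:ℝ), β (s + T) * Real.exp (-(a (s + T)))
        = E⁻¹ * (β s * Real.exp (-(a s))) := by
      intro s hs
      rw [hβp s hs, hashift s hs, neg_add, Real.exp_add, hE, ← Real.exp_neg]
      ring
    rw [primitive_shift_aux _ _ T hT.le hβint hfg u hu,
      intervalIntegral.integral_const_mul]
  have hFshift : ∀ u ≥ (0:ℝ),
      (∫ s in (0:ℝ)..(u+T), b s * Real.exp (-(a s)))
        = (∫ s in (0:ℝ)..T, b s * Real.exp (-(a s)))
          + E⁻¹ * ((∫ s in (0:ℝ)..u, b s * Real.exp (-(a s)))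
              + ∫ s in (0:ℝ)..u, β s * Real.exp (-(a s))) := by
    intro u hu
    have hfg : ∀ s ≥ (0:ℝ), b (s + T) * Real.exp (-(a (s + T)))
        = E⁻¹ * (b s * Real.exp (-(a s)) + β s * Real.exp (-(a s))) := by
      intro s hs
      rw [hdrift s hs, hashift s hs, neg_add, Real.exp_add, hE, ← Real.exp_neg]
      ring
    have hib : IntervalIntegrable (fun s => b s * Real.exp (-(a s))) volume 0 u := by
      refine (hbint.mono ?_).intervalIntegrable
      rw [Set.uIcc_of_le hu]; exact Set.Icc_subset_Ici_self
    have hiβ : IntervalIntegrable (fun s => β s * Real.exp (-(a s))) volume 0 u := by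
      refine (hβint.mono ?_).intervalIntegrable
      rw [Set.uIcc_of_le hu]; exact Set.Icc_subset_Ici_self
    rw [primitive_shift_aux _ _ T hT.le hbint hfg u hu,
      intervalIntegral.integral_const_mul, intervalIntegral.integral_add hib hiβ]
  -- key algebraic relation between L, the period integrals, and E
  have hLrel : E * (∫ s in (0:ℝ)..T, b s * Real.exp (-(a s)))
      = L * (1 - E) + (E / (1 - E)) * (∫ s in (0:ℝ)..T, β s * Real.exp (-(a s))) := by
    rw [hL]; field_simp; ring
  -- main induction
  have key : ∀ n : ℕ, ∀ t ≥ (0:ℝ),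
      E ^ n * (∫ s in (0:ℝ)..(t + n * T), β s * Real.exp (-(a s)))
        = (∫ s in (0:ℝ)..t, β s * Real.exp (-(a s)))
          + (E / (1 - E)) * (∫ s in (0:ℝ)..T, β s * Real.exp (-(a s))) * (1 - E ^ n)
      ∧ E ^ n * (∫ s in (0:ℝ)..(t + n * T), b s * Real.exp (-(a s)))
        = L + (∫ s in (0:ℝ)..t, b s * Real.exp (-(a s))) - E ^ n * L
          + n * ((E / (1 - E)) * (∫ s in (0:ℝ)..T, β s * Real.exp (-(a s)))
                 + ∫ s in (0:ℝ)..t, β s * Real.exp (-(a s))) := by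
    intro n
    induction n with
    | zero => intro t ht; simp
    | succ n ih =>
      intro t ht
      obtain ⟨ihg, ihb⟩ := ih t ht
      have hpos : (0:ℝ) ≤ t + n * T := by positivity
      have hsplit : t + ((n:ℕ)+1 : ℕ) * T = (t + n * T) + T := by push_cast; ring
      have hc : (E / (1 - E)) * (∫ s in (0:ℝ)..T, β s * Real.exp (-(a s))) * (1 - E)
          = E * (∫ s in (0:ℝ)..T, β s * Real.exp (-(a s))) := by
        field_simp
      constructor
      · rw [hsplit, hGshift _ hpos, pow_succ]
        linear_combination ihg
          + (E ^ n * (∫ s in (0:ℝ)..(t + n * T), β s * Real.exp (-(a s)))) * hEE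
          - E ^ n * hc
      · rw [hsplit, hFshift _ hpos, pow_succ]
        push_cast
        linear_combination ihb + ihg
          + (E ^ n * ((∫ s in (0:ℝ)..(t + n * T), b s * Real.exp (-(a s)))
              + (∫ s in (0:ℝ)..(t + n * T), β s * Real.exp (-(a s))))) * hEE
          + E ^ n * hLrel
  -- conclusion
  intro n t ht
  rw [hy, hyInf, hγ, haN n t ht, Real.exp_add, Real.exp_nat_mul, ← hE]
  linear_combination Real.exp (a t) * (key n t ht).2
end

section
/- Under the stated assumptions, the drifted solution is unique: if ỹ is any solution of y′(t) = λρ(t)y(t) + b(t) on [0,∞) such that ỹ(t+T) = ỹ(t) + γ̃(t) for all t ≥ 0 for some T-periodic function γ̃, then ỹ(0) = L(T) and hence ỹ(t) = e^{a(t)}·( L(T) + ∫₀ᵗ b(s)e^{−a(s)} ds ) for all t ≥ 0, where L(T) = (e^{a(T)}/(1 − e^{a(T)}))·∫₀ᵀ b(s)e^{−a(s)} ds − (e^{a(T)}/(1 − e^{a(T)})²)·∫₀ᵀ β(s)e^{−a(s)} ds. -/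
open MeasureTheory intervalIntegral Real Set

/-! Variation of constants writes every solution as `y t = e^{a t} (y 0 + ∫₀ᵗ b e^{-a})`, so only
`y 0` has to be determined. Periodicity of `ρ` makes `a (t + T) = a t + a T`, and together with
the drift of `b` this gives `∫_T^{2T} b e^{-a} = e^{-a T} (B + D)`, where `B = ∫₀ᵀ b e^{-a}` and
`D = ∫₀ᵀ β e^{-a}`. With `E = e^{a T}` one gets `y T = E (y 0 + B)` and
`y (2T) = E y T + E (B + D)`, while periodicity of `γ̃` gives `y (2T) - y T = y T - y 0`. This is
the linear equation `y 0 (1 - E)² = E (1 - E) B - E D`, uniquely solvable since `a T < 0`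
forces `E ≠ 1`. -/

theorem eq_exp_mul_add_integral_of_hasDerivAt {y a α b : ℝ → ℝ} {t₀ t₁ : ℝ}
    (h : t₀ ≤ t₁) (hy : ContinuousOn y (Icc t₀ t₁)) (ha : ContinuousOn a (Icc t₀ t₁))
    (hb : ContinuousOn b (Icc t₀ t₁)) (ha' : ∀ t ∈ Ioo t₀ t₁, HasDerivAt a (α t) t)
    (hy' : ∀ t ∈ Ioo t₀ t₁, HasDerivAt y (α t * y t + b t) t) :
    y t₁ = exp (a t₁) * (y t₀ * exp (-a t₀) + ∫ t in t₀..t₁, b t * exp (-a t)) := by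
  have hFTC : ∫ t in t₀..t₁, b t * exp (-a t) = y t₁ * exp (-a t₁) - y t₀ * exp (-a t₀) := by
    refine integral_eq_sub_of_hasDerivAt_of_le (f := fun t => y t * exp (-a t)) h
      (hy.mul ha.neg.rexp) (fun t ht => ?_) ((hb.mul ha.neg.rexp).intervalIntegrable_of_Icc h)
    exact ((hy' t ht).mul (ha' t ht).neg.exp).congr_deriv (by simp only [Pi.neg_apply]; ring)
  rw [hFTC, add_sub_cancel, exp_neg, mul_left_comm, mul_inv_cancel₀ (exp_ne_zero _), mul_one]

theorem eq_exp_mul_add_integral_of_hasDerivAt_Ici {y a α b : ℝ → ℝ}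
    (hy' : ∀ t ≥ 0, HasDerivAt y (α t * y t + b t) t) (ha : ContinuousOn a (Ici 0))
    (ha' : ∀ t > 0, HasDerivAt a (α t) t) (hb : ContinuousOn b (Ici 0)) {t₀ t₁ : ℝ}
    (h₀ : 0 ≤ t₀) (h : t₀ ≤ t₁) :
    y t₁ = exp (a t₁) * (y t₀ * exp (-a t₀) + ∫ t in t₀..t₁, b t * exp (-a t)) :=
  have hsub : Icc t₀ t₁ ⊆ Ici 0 := fun _ hs => h₀.trans hs.1
  eq_exp_mul_add_integral_of_hasDerivAt h
    (fun t ht => (hy' t (hsub ht)).continuousAt.continuousWithinAt) (ha.mono hsub)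
    (hb.mono hsub) (fun t ht => ha' t (h₀.trans_lt ht.1)) (fun t ht => hy' t (h₀.trans ht.1.le))

theorem intervalIntegrable_of_continuousOn_Ici {f : ℝ → ℝ} (hf : ContinuousOn f (Ici 0))
    {t₀ t₁ : ℝ} (h₀ : 0 ≤ t₀) (h₁ : 0 ≤ t₁) : IntervalIntegrable f volume t₀ t₁ :=
  (hf.mono fun _ hs => le_trans (le_min h₀ h₁) hs.1).intervalIntegrable

section PrimitiveOnHalfLine

variable {f : ℝ → ℝ}

theorem continuousOn_primitive_of_continuousOn_Ici (hf : ContinuousOn f (Ici 0)) :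
    ContinuousOn (fun t => ∫ s in 0..t, f s) (Ici 0) := by
  intro t (ht : 0 ≤ t)
  have hIcc : ContinuousOn (fun t => ∫ s in 0..t, f s) (Icc 0 (t + 1)) := by
    rw [← uIcc_of_le (by linarith)]
    exact continuousOn_primitive_interval'
      (intervalIntegrable_of_continuousOn_Ici hf le_rfl (by linarith)) left_mem_uIcc
  exact (hIcc t ⟨ht, by linarith⟩).mono_of_mem_nhdsWithin
    (inter_mem_nhdsWithin _ (Iic_mem_nhds (by linarith)))

theorem hasDerivAt_primitive_of_continuousOn_Ici (hf : ContinuousOn f (Ici 0)) {t : ℝ}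
    (ht : 0 < t) :
    HasDerivAt (fun u => ∫ s in 0..u, f s) (f t) t :=
  integral_hasDerivAt_right (intervalIntegrable_of_continuousOn_Ici hf le_rfl ht.le)
    ((hf.mono Ioi_subset_Ici_self).stronglyMeasurableAtFilter isOpen_Ioi t ht)
    (hf.continuousAt (Ici_mem_nhds ht))

theorem primitive_add_period_of_continuousOn_Ici (hf : ContinuousOn f (Ici 0)) {T t : ℝ}
    (hT : 0 ≤ T) (ht : 0 ≤ t) (hper : ∀ s ≥ 0, f (s + T) = f s) :
    ∫ s in 0..t + T, f s = (∫ s in 0..t, f s) + ∫ s in 0..T, f s := by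
  have hshift : ∫ s in T..t + T, f s = ∫ s in 0..t, f s := by
    have := integral_comp_add_right (a := 0) (b := t) f T
    rw [zero_add] at this
    rw [← this]
    refine integral_congr fun s hs => hper s ?_
    rw [uIcc_of_le ht] at hs
    exact hs.1
  rw [← integral_add_adjacent_intervals (b := T)
    (intervalIntegrable_of_continuousOn_Ici hf le_rfl hT)
    (intervalIntegrable_of_continuousOn_Ici hf hT (by linarith)), hshift, add_comm]

end PrimitiveOnHalfLine

theorem integral_shift_mul_exp_neg_of_drift {a b β : ℝ → ℝ} {T t : ℝ} (ht : 0 ≤ t)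
    (ha : ContinuousOn a (Ici 0)) (hb : ContinuousOn b (Ici 0)) (hβ : ContinuousOn β (Ici 0))
    (ha_add : ∀ s ≥ 0, a (s + T) = a s + a T) (hdrift : ∀ s ≥ 0, b (s + T) = b s + β s) :
    ∫ s in T..t + T, b s * exp (-a s) =
      exp (-a T) * ((∫ s in 0..t, b s * exp (-a s)) + ∫ s in 0..t, β s * exp (-a s)) := by
  have hshift := integral_comp_add_right (a := 0) (b := t) (fun s => b s * exp (-a s)) T
  rw [zero_add] at hshift
  have hint {g : ℝ → ℝ} (hg : ContinuousOn g (Ici 0)) :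
      IntervalIntegrable (fun s => g s * exp (-a s)) volume 0 t :=
    intervalIntegrable_of_continuousOn_Ici (hg.mul ha.neg.rexp) le_rfl ht
  rw [← hshift, ← integral_add (hint hb) (hint hβ), ← intervalIntegral.integral_const_mul]
  refine integral_congr fun s hs => ?_
  have hs₀ : 0 ≤ s := by
    rw [uIcc_of_le ht] at hs
    exact hs.1
  rw [hdrift s hs₀, ha_add s hs₀, neg_add, exp_add]
  ring

theorem eq_of_increment_eq {E y₀ y₁ y₂ B D : ℝ} (hE : E ≠ 1) (h₁ : y₁ = E * (y₀ + B))
    (h₂ : y₂ = E * (y₁ + (B + D))) (h : y₂ - y₁ = y₁ - y₀) :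
    y₀ = E / (1 - E) * B - E / (1 - E) ^ 2 * D := by
  have h1E : 1 - E ≠ 0 := sub_ne_zero.mpr hE.symm
  have hkey : y₀ * (1 - E) ^ 2 = E * (1 - E) * B - E * D := by
    linear_combination h + (2 - E) * h₁ - h₂
  field_simp
  linear_combination hkey

theorem drifted_solution_unique_general (lam T : ℝ) (hlam : lam < 0) (hT : 0 < T)
    (ρ : ℝ → ℝ) (hρc : ContinuousOn ρ (Set.Ici 0))
    (hρp : ∀ t ≥ (0:ℝ), ρ (t + T) = ρ t)
    (hρpos : 0 < ∫ s in (0:ℝ)..T, ρ s)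
    (a : ℝ → ℝ) (ha : ∀ t, a t = lam * ∫ s in (0:ℝ)..t, ρ s)
    (b β : ℝ → ℝ) (hbc : ContinuousOn b (Set.Ici 0)) (hβc : ContinuousOn β (Set.Ici 0))
    (hdrift : ∀ t ≥ (0:ℝ), b (t + T) = b t + β t)
    (L : ℝ)
    (hL : L = (Real.exp (a T) / (1 - Real.exp (a T))) *
        (∫ s in (0:ℝ)..T, b s * Real.exp (-(a s)))
      - (Real.exp (a T) / (1 - Real.exp (a T)) ^ 2) *
        (∫ s in (0:ℝ)..T, β s * Real.exp (-(a s))))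
    (ytilde : ℝ → ℝ)
    (hsol : ∀ t ≥ (0:ℝ), HasDerivAt ytilde (lam * ρ t * ytilde t + b t) t)
    (γtilde : ℝ → ℝ)
    (hγp : ∀ t ≥ (0:ℝ), γtilde (t + T) = γtilde t)
    (hydrift : ∀ t ≥ (0:ℝ), ytilde (t + T) = ytilde t + γtilde t) :
    ytilde 0 = L ∧
    ∀ t ≥ (0:ℝ), ytilde t = Real.exp (a t) *
      (L + ∫ s in (0:ℝ)..t, b s * Real.exp (-(a s))) := by
  have ha_cont : ContinuousOn a (Ici 0) :=
    (continuousOn_const.mul (continuousOn_primitive_of_continuousOn_Ici hρc)).congr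
      fun t _ => ha t
  have ha_deriv : ∀ t > 0, HasDerivAt a (lam * ρ t) t := fun t ht => by
    simpa only [← ha] using (hasDerivAt_primitive_of_continuousOn_Ici hρc ht).const_mul lam
  have ha_zero : a 0 = 0 := by simp [ha]
  have ha_add : ∀ t ≥ 0, a (t + T) = a t + a T := fun t ht => by
    simp only [ha, primitive_add_period_of_continuousOn_Ici hρc hT.le ht hρp]
    ring
  have hE : exp (a T) ≠ 1 := by
    rw [ne_eq, exp_eq_one_iff, ha]
    exact (mul_neg_of_neg_of_pos hlam hρpos).ne
  have hvoc {t₀ t₁ : ℝ} (h₀ : 0 ≤ t₀) (h : t₀ ≤ t₁) := eq_exp_mul_add_integral_of_hasDerivAt_Ici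
    hsol ha_cont ha_deriv hbc h₀ h
  have hy0 : ytilde 0 = L := by
    have hyT : ytilde T = exp (a T) * (ytilde 0 + ∫ s in 0..T, b s * exp (-a s)) := by
      simpa only [ha_zero, neg_zero, exp_zero, mul_one, zero_add] using hvoc le_rfl hT.le
    have hy2T : ytilde (T + T) = exp (a T) * (ytilde T +
        ((∫ s in 0..T, b s * exp (-a s)) + ∫ s in 0..T, β s * exp (-a s))) := by
      rw [hvoc hT.le (by linarith),
        integral_shift_mul_exp_neg_of_drift hT.le ha_cont hbc hβc ha_add hdrift,
        ha_add T hT.le, exp_add, exp_neg]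
      field_simp
    have hdiff : ytilde (T + T) - ytilde T = ytilde T - ytilde 0 := by
      have h₀ := hydrift 0 le_rfl
      have hγ := hγp 0 le_rfl
      rw [zero_add] at h₀ hγ
      rw [hydrift T hT.le, hγ, h₀]
      ring
    rw [hL]
    exact eq_of_increment_eq hE hyT hy2T hdiff
  refine ⟨hy0, fun t ht => ?_⟩
  rw [hvoc le_rfl ht, hy0, ha_zero, neg_zero, exp_zero, mul_one]

/-- Uniqueness of the drifted solution: any solution `ỹ` of `y' = λ ρ y + b`
satisfying `ỹ(t+T) = ỹ(t) + γ̃(t)` with `γ̃` `T`-periodic must have `ỹ(0) = L(T)`, hence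
`ỹ(t) = e^{a t}(L(T) + ∫₀ᵗ b e^{-a})`. -/
theorem drifted_solution_unique (lam T : ℝ) (hlam : lam < 0) (hT : 0 < T)
    (ρ : ℝ → ℝ) (hρc : ContinuousOn ρ (Set.Ici 0))
    (hρp : ∀ t ≥ (0:ℝ), ρ (t + T) = ρ t)
    (hρpos : 0 < ∫ s in (0:ℝ)..T, ρ s)
    (a : ℝ → ℝ) (ha : ∀ t, a t = lam * ∫ s in (0:ℝ)..t, ρ s)
    (b β : ℝ → ℝ) (hbc : ContinuousOn b (Set.Ici 0)) (hβc : ContinuousOn β (Set.Ici 0))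
    (hβp : ∀ t ≥ (0:ℝ), β (t + T) = β t)
    (hdrift : ∀ t ≥ (0:ℝ), b (t + T) = b t + β t)
    (L : ℝ)
    (hL : L = (Real.exp (a T) / (1 - Real.exp (a T))) *
        (∫ s in (0:ℝ)..T, b s * Real.exp (-(a s)))
      - (Real.exp (a T) / (1 - Real.exp (a T)) ^ 2) *
        (∫ s in (0:ℝ)..T, β s * Real.exp (-(a s))))
    (ytilde : ℝ → ℝ)
    (hsol : ∀ t ≥ (0:ℝ), HasDerivAt ytilde (lam * ρ t * ytilde t + b t) t)
    (γtilde : ℝ → ℝ)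
    (hγp : ∀ t ≥ (0:ℝ), γtilde (t + T) = γtilde t)
    (hydrift : ∀ t ≥ (0:ℝ), ytilde (t + T) = ytilde t + γtilde t) :
    ytilde 0 = L ∧
    ∀ t ≥ (0:ℝ), ytilde t = Real.exp (a t) *
      (L + ∫ s in (0:ℝ)..t, b s * Real.exp (-(a s))) :=
  drifted_solution_unique_general lam T hlam hT ρ hρc hρp hρpos a ha b β hbc hβc hdrift L hL ytilde
    hsol γtilde hγp hydrift
end

section
/- Under the stated assumptions, for every fixed t ≥ 0 the sequence uₙ(t) = y(t + nT) − n·γ(t) converges as n → ∞ to y_∞(t) = e^{a(t)}·( L(T) + ∫₀ᵗ b(s)e^{−a(s)} ds ), where L(T) = (e^{a(T)}/(1 − e^{a(T)}))·∫₀ᵀ b(s)e^{−a(s)} ds − (e^{a(T)}/(1 − e^{a(T)})²)·∫₀ᵀ β(s)e^{−a(s)} ds and γ(t) = e^{a(t)}·( (e^{a(T)}/(1 − e^{a(T)}))·∫₀ᵀ β(s)e^{−a(s)} ds + ∫₀ᵗ β(s)e^{−a(s)} ds ). -/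
open MeasureTheory intervalIntegral Real Filter Set Topology

/-!
Periodicity of `ρ` gives `a (s + T) = a s + a T`, so with `q = exp (a T) < 1` the solution obeys
`y (s + T) = q * y s + h s`, where `h s = exp (a s) * (q F(T) + (1 - q) F(s) + G(s))` for the
weighted primitives `F, G` of `b, β`. The drift of `b` makes `h` grow by `(1 - q) γ` per period,
and `γ` is `T`-periodic. Hence `uₙ = y (t + n T) - n γ(t)` satisfies the affine recurrence
`uₙ₊₁ = q uₙ + (h t - γ t)` and tends to its fixed point `(h t - γ t) / (1 - q) = yInf t`.
-/

theorem tendsto_of_forall_succ_eq_mul_add {q c : ℝ} (hq : |q| < 1) {x : ℕ → ℝ}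
    (hx : ∀ n, x (n + 1) = q * x n + c) :
    Tendsto x atTop (𝓝 (c / (1 - q))) := by
  have hq1 : 1 - q ≠ 0 := by linarith [le_abs_self q]
  set l := c / (1 - q) with hl
  have hfix : q * l + c = l := by rw [hl]; field_simp; ring
  have hclosed : ∀ n, x n = q ^ n * (x 0 - l) + l := by
    intro n
    induction n with
    | zero => simp
    | succ n ih => rw [hx, ih]; linear_combination hfix
  have hlim := ((tendsto_pow_atTop_nhds_zero_of_abs_lt_one hq).mul_const (x 0 - l)).add_const l
  rw [zero_mul, zero_add] at hlim
  exact hlim.congr fun n => (hclosed n).symm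

theorem tendsto_sub_nat_mul_of_shift {y h γ : ℝ → ℝ} {q t T : ℝ} (hq : |q| < 1) (hT : 0 ≤ T)
    (hy : ∀ s ≥ t, y (s + T) = q * y s + h s)
    (hh : ∀ s ≥ t, h (s + T) = h s + (1 - q) * γ s)
    (hγ : ∀ s ≥ t, γ (s + T) = γ s) :
    Tendsto (fun n : ℕ => y (t + n * T) - n * γ t) atTop (𝓝 ((h t - γ t) / (1 - q))) := by
  have hstep : ∀ n : ℕ, t + (n + 1 : ℕ) * T = t + n * T + T := fun n => by push_cast; ring
  have hle : ∀ n : ℕ, t ≤ t + n * T := fun n => le_add_of_nonneg_right (by positivity)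
  have hγn : ∀ n : ℕ, γ (t + n * T) = γ t := by
    intro n
    induction n with
    | zero => simp
    | succ n ih => rw [hstep, hγ _ (hle n), ih]
  have hhn : ∀ n : ℕ, h (t + n * T) = h t + n * ((1 - q) * γ t) := by
    intro n
    induction n with
    | zero => simp
    | succ n ih => rw [hstep, hh _ (hle n), ih, hγn]; push_cast; ring
  refine tendsto_of_forall_succ_eq_mul_add hq fun n => ?_
  rw [hstep, hy _ (hle n), hhn]
  push_cast
  ring

theorem ContinuousOn.intervalIntegrable_of_Ici {E : Type*} [NormedAddCommGroup E]
    {f : ℝ → E} {c x z : ℝ} (hf : ContinuousOn f (Ici c)) (hx : c ≤ x) (hz : c ≤ z) :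
    IntervalIntegrable f volume x z :=
  (hf.mono fun _ hs => (le_min hx hz).trans hs.1).intervalIntegrable

theorem ContinuousOn.continuousOn_primitive_Ici {E : Type*} [NormedAddCommGroup E]
    [NormedSpace ℝ E] {f : ℝ → E} {c : ℝ} (hf : ContinuousOn f (Ici c)) :
    ContinuousOn (fun x => ∫ t in c..x, f t) (Ici c) := by
  intro x hx
  have hint : IntervalIntegrable f volume (min c c) (max c (x + 1)) :=
    hf.intervalIntegrable_of_Ici (by simp) (by simp)
  refine (continuousWithinAt_primitive Real.volume_singleton hint).mono_of_mem_nhdsWithin ?_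
  filter_upwards [self_mem_nhdsWithin, nhdsWithin_le_nhds (Iio_mem_nhds (lt_add_one x))]
    with s hs hs' using ⟨hs, hs'.le⟩

theorem intervalIntegral.integral_add_eq_of_shift {E : Type*} [NormedAddCommGroup E]
    [NormedSpace ℝ E] {h k : ℝ → E} {t T : ℝ} (h₁ : IntervalIntegrable h volume 0 T)
    (h₂ : IntervalIntegrable h volume T (t + T)) (hhk : ∀ s ∈ uIcc 0 t, h (s + T) = k s) :
    ∫ s in 0..t + T, h s = (∫ s in 0..T, h s) + ∫ s in 0..t, k s := by
  rw [← integral_add_adjacent_intervals h₁ h₂, ← integral_congr hhk, integral_comp_add_right,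
    zero_add]

theorem integral_mul_exp_neg_add_of_shift {a f k : ℝ → ℝ} {t T : ℝ} (hT : 0 ≤ T) (ht : 0 ≤ t)
    (ha : ContinuousOn a (Ici 0)) (hf : ContinuousOn f (Ici 0))
    (ha_add : ∀ s ≥ 0, a (s + T) = a s + a T) (hfk : ∀ s ≥ 0, f (s + T) = k s) :
    ∫ s in 0..t + T, f s * exp (-a s) =
      (∫ s in 0..T, f s * exp (-a s)) + exp (-a T) * ∫ s in 0..t, k s * exp (-a s) := by
  have hw : ContinuousOn (fun s => f s * exp (-a s)) (Ici 0) := hf.mul ha.neg.rexp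
  rw [← intervalIntegral.integral_const_mul]
  refine integral_add_eq_of_shift (hw.intervalIntegrable_of_Ici le_rfl hT)
    (hw.intervalIntegrable_of_Ici hT (by linarith)) fun s hs => ?_
  rw [uIcc_of_le ht] at hs
  rw [hfk s hs.1, ha_add s hs.1, neg_add, exp_add]
  ring

theorem tendsto_sub_nat_mul_of_primitive_shift {a F G y γ : ℝ → ℝ} {T L t : ℝ} (hT : 0 ≤ T)
    (haT : a T < 0)
    (ha : ∀ s ≥ 0, a (s + T) = a s + a T)
    (hF : ∀ s ≥ 0, F (s + T) = F T + exp (-a T) * (F s + G s))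
    (hG : ∀ s ≥ 0, G (s + T) = G T + exp (-a T) * G s)
    (hy : ∀ s, y s = exp (a s) * (y 0 + F s))
    (hL : L = exp (a T) / (1 - exp (a T)) * F T - exp (a T) / (1 - exp (a T)) ^ 2 * G T)
    (hγ : ∀ s, γ s = exp (a s) * (exp (a T) / (1 - exp (a T)) * G T + G s)) (ht : 0 ≤ t) :
    Tendsto (fun n : ℕ => y (t + n * T) - n * γ t) atTop (𝓝 (exp (a t) * (L + F t))) := by
  set q := exp (a T) with hq
  have hq0 : 0 < q := exp_pos _
  have hq1 : q < 1 := exp_lt_one_iff.2 haT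
  have hq1' : 1 - q ≠ 0 := by linarith
  have hexp : ∀ s ≥ 0, exp (a (s + T)) = exp (a s) * q := fun s hs => by rw [ha s hs, exp_add]
  rw [exp_neg, ← hq] at hF hG
  have hlim := tendsto_sub_nat_mul_of_shift (y := y) (γ := γ) (t := t)
    (h := fun s => exp (a s) * (q * F T + (1 - q) * F s + G s)) (abs_lt.2 ⟨by linarith, hq1⟩) hT
    (fun s hs => ?_) (fun s hs => ?_) (fun s hs => ?_)
  · convert hlim using 2
    rw [hL, hγ]
    field_simp
    ring
  · rw [hy (s + T), hy s, hexp s (ht.trans hs), hF s (ht.trans hs)]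
    field_simp
    ring
  · rw [hγ, hexp s (ht.trans hs), hF s (ht.trans hs), hG s (ht.trans hs)]
    field_simp
    ring
  · rw [hγ, hγ, hexp s (ht.trans hs), hG s (ht.trans hs)]
    field_simp
    ring

/-- For each fixed `t ≥ 0`, `uₙ(t) = y(t + nT) - n γ(t) → y_∞(t)` as `n → ∞`. -/
theorem u_n_tendsto_yInf (lam T : ℝ) (hlam : lam < 0) (hT : 0 < T)
    (ρ : ℝ → ℝ) (hρc : ContinuousOn ρ (Set.Ici 0))
    (hρp : ∀ t ≥ (0:ℝ), ρ (t + T) = ρ t)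
    (hρpos : 0 < ∫ s in (0:ℝ)..T, ρ s)
    (a : ℝ → ℝ) (ha : ∀ t, a t = lam * ∫ s in (0:ℝ)..t, ρ s)
    (b β : ℝ → ℝ) (hbc : ContinuousOn b (Set.Ici 0)) (hβc : ContinuousOn β (Set.Ici 0))
    (hβp : ∀ t ≥ (0:ℝ), β (t + T) = β t)
    (hdrift : ∀ t ≥ (0:ℝ), b (t + T) = b t + β t)
    (y : ℝ → ℝ)
    (hy : ∀ t, y t = Real.exp (a t) * (y 0 + ∫ s in (0:ℝ)..t, b s * Real.exp (-(a s))))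
    (L : ℝ)
    (hL : L = (Real.exp (a T) / (1 - Real.exp (a T))) *
        (∫ s in (0:ℝ)..T, b s * Real.exp (-(a s)))
      - (Real.exp (a T) / (1 - Real.exp (a T)) ^ 2) *
        (∫ s in (0:ℝ)..T, β s * Real.exp (-(a s))))
    (yInf : ℝ → ℝ)
    (hyInf : ∀ t, yInf t = Real.exp (a t) * (L + ∫ s in (0:ℝ)..t, b s * Real.exp (-(a s))))
    (γ : ℝ → ℝ)
    (hγ : ∀ t, γ t = Real.exp (a t) *
      ((Real.exp (a T) / (1 - Real.exp (a T))) * (∫ s in (0:ℝ)..T, β s * Real.exp (-(a s)))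
        + ∫ s in (0:ℝ)..t, β s * Real.exp (-(a s)))) :
    ∀ t ≥ (0:ℝ),
      Tendsto (fun n : ℕ => y (t + n * T) - n * γ t) atTop (nhds (yInf t)) := by
  intro t ht
  have ha_cont : ContinuousOn a (Ici 0) :=
    (continuousOn_const.mul hρc.continuousOn_primitive_Ici).congr fun s _ => ha s
  have ha_add : ∀ s ≥ 0, a (s + T) = a s + a T := fun s hs => by
    rw [ha, ha, ha, integral_add_eq_of_shift (hρc.intervalIntegrable_of_Ici le_rfl hT.le)
      (hρc.intervalIntegrable_of_Ici hT.le (by linarith)) fun u hu => hρp u ?_]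
    · ring
    · exact (uIcc_of_le hs ▸ hu).1
  have hw : ∀ f : ℝ → ℝ, ContinuousOn f (Ici 0) → ∀ s ≥ (0 : ℝ),
      IntervalIntegrable (fun u => f u * exp (-a u)) volume 0 s := fun f hf s hs =>
    (hf.mul ha_cont.neg.rexp).intervalIntegrable_of_Ici le_rfl hs
  rw [hyInf t]
  refine tendsto_sub_nat_mul_of_primitive_shift (F := fun t => ∫ s in 0..t, b s * exp (-a s))
    (G := fun t => ∫ s in 0..t, β s * exp (-a s)) hT.le
    (ha T ▸ mul_neg_of_neg_of_pos hlam hρpos) ha_add (fun s hs => ?_)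
    (fun s hs => integral_mul_exp_neg_add_of_shift hT.le hs ha_cont hβc ha_add hβp) hy hL hγ ht
  rw [integral_mul_exp_neg_add_of_shift hT.le hs ha_cont hbc ha_add hdrift]
  simp only [add_mul]
  rw [integral_add (hw b hbc s hs) (hw β hβc s hs)]
end
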